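/- Let ρ₀ be the uniform probability measure on [−1,1] ⊂ ℝ, ρ₂ = ½δ₁ + ½δ₋₁, and ρ₁ = ρ₀ (uniform on [−1,1]). Consider the 3-marginal problem at times 0, ½, 1 with cost c(x₀,x₁,x₂) equal to the minimal acceleration energy of a C² curve through (0,x₀), (½,x₁), (1,x₂). Then the Kantorovich infimum over plans with marginals (ρ₀, ρ₁, ρ₂) is 0, but there exists no pair of Borel maps T₁, T₂ : [−1,1] → ℝ with (T₁)_*ρ₀ = ρ₁, (T₂)_*ρ₀ = ρ₂ and ∫ c(x, T₁(x), T₂(x)) dρ₀(x) = 0; i.e., no Monge solution attains the Kantorovich optimum. -/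

import Mathlib

open MeasureTheory

/-- Minimal acceleration energy of a `C²` curve through `(0,x₀)`, `(1/2,x₁)`, `(1,x₂)`. -/
noncomputable def acc3 (x0 x1 x2 : ℝ) : ℝ :=
  sInf { e : ℝ | ∃ γ : ℝ → ℝ, ContDiff ℝ 2 γ ∧
    γ 0 = x0 ∧ γ (1/2) = x1 ∧ γ 1 = x2 ∧
    e = ∫ t in (0:ℝ)..1, ‖deriv (deriv γ) t‖ ^ 2 }

/-- Uniform probability measure on `[-1,1]`. -/
noncomputable def unif : Measure ℝ := (2 : ENNReal)⁻¹ • volume.restrict (Set.Icc (-1:ℝ) 1)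

/-!
The cost only sees the defect `d = x₁ - (x₀ + x₂) / 2`: adding an affine function to a curve does
not change its acceleration and scaling the curve by `m` scales the energy by `m²`, so
`acc3 x₀ x₁ x₂ = d² κ` with `κ = acc3 0 1 0 ≥ 16`. Sending `x` to `(x, (x ± 1) / 2, ±1)` with
probability `½` each gives a plan of zero cost with the required marginals, because the images
`(x ± 1) / 2` of `[-1, 1]` are its two halves. A zero-cost Monge pair would instead satisfy
`T₁ x = (x + 1) / 2` on `{T₂ = 1}`, a set of measure `½`; but a map that contracts a set of positive
measure by the factor `½` cannot preserve the uniform measure.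
-/

def accEnergies (x0 x1 x2 : ℝ) : Set ℝ :=
  { e : ℝ | ∃ γ : ℝ → ℝ, ContDiff ℝ 2 γ ∧
    γ 0 = x0 ∧ γ (1/2) = x1 ∧ γ 1 = x2 ∧
    e = ∫ t in (0:ℝ)..1, ‖deriv (deriv γ) t‖ ^ 2 }

lemma acc3_eq_sInf (x0 x1 x2 : ℝ) : acc3 x0 x1 x2 = sInf (accEnergies x0 x1 x2) := rfl

lemma nonneg_of_mem_accEnergies {x0 x1 x2 e : ℝ} (he : e ∈ accEnergies x0 x1 x2) : 0 ≤ e := by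
  obtain ⟨γ, -, -, -, -, rfl⟩ := he
  exact intervalIntegral.integral_nonneg zero_le_one fun t _ => by positivity

lemma ContDiff.differentiable_deriv_of_two {γ : ℝ → ℝ} (hγ : ContDiff ℝ 2 γ) :
    Differentiable ℝ (deriv γ) :=
  (hγ.deriv' (n := 1)).differentiable one_ne_zero

lemma affine_add_smul_mem_accEnergies {x0 x1 x2 e : ℝ} (he : e ∈ accEnergies x0 x1 x2)
    (a b m : ℝ) : m ^ 2 * e ∈ accEnergies (a + m * x0) (a + b / 2 + m * x1) (a + b + m * x2) := by
  obtain ⟨γ, hγ, h0, hmid, h1, rfl⟩ := he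
  have hγ' : deriv (fun t => a + t * b + m * γ t) = fun t => b + m * deriv γ t := funext fun t => by
    have := (((hasDerivAt_id t).mul_const b).const_add a).add
      ((hγ.differentiable two_ne_zero t).hasDerivAt.const_mul m)
    rw [one_mul] at this
    exact this.deriv
  have hγ'' : deriv (deriv (fun t => a + t * b + m * γ t)) = fun t => m * deriv (deriv γ) t := by
    rw [hγ']
    funext t
    simp [(((hγ.differentiable_deriv_of_two t).hasDerivAt.const_mul m).const_add b).deriv]
  refine ⟨fun t => a + t * b + m * γ t, by fun_prop, by simp [h0], by beta_reduce; rw [hmid]; ring,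
    by simp [h1], ?_⟩
  simp only [hγ'', norm_mul, mul_pow, Real.norm_eq_abs, sq_abs, intervalIntegral.integral_const_mul]

lemma acc3_nonneg (x0 x1 x2 : ℝ) : 0 ≤ acc3 x0 x1 x2 :=
  Real.sInf_nonneg fun _ => nonneg_of_mem_accEnergies

lemma bddBelow_accEnergies (x0 x1 x2 : ℝ) : BddBelow (accEnergies x0 x1 x2) :=
  ⟨0, fun _ => nonneg_of_mem_accEnergies⟩

lemma accEnergies_zero_one_zero_nonempty : (accEnergies 0 1 0).Nonempty :=
  ⟨_, fun t => 4 * t - 4 * t ^ 2, by fun_prop, by norm_num, by norm_num, by norm_num, rfl⟩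

lemma acc3_eq_zero_of_eq_midpoint {x0 x1 x2 : ℝ} (h : x1 = (x0 + x2) / 2) :
    acc3 x0 x1 x2 = 0 := by
  obtain ⟨e, he⟩ := accEnergies_zero_one_zero_nonempty
  have h0 : 0 ∈ accEnergies x0 x1 x2 := by
    convert affine_add_smul_mem_accEnergies he x0 (x2 - x0) 0 using 2 <;> linarith
  exact le_antisymm (csInf_le (bddBelow_accEnergies _ _ _) h0) (acc3_nonneg _ _ _)

lemma accEnergies_eq_image {x0 x1 x2 : ℝ} (hd : x1 - (x0 + x2) / 2 ≠ 0) :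
    accEnergies x0 x1 x2 = (fun e => (x1 - (x0 + x2) / 2) ^ 2 * e) '' accEnergies 0 1 0 := by
  set d := x1 - (x0 + x2) / 2 with hd_def
  ext e
  constructor
  · intro he
    refine ⟨(d⁻¹) ^ 2 * e, ?_, by field_simp⟩
    convert affine_add_smul_mem_accEnergies he (-x0 / d) ((x0 - x2) / d) d⁻¹ using 2 <;>
      field_simp <;> linarith
  · rintro ⟨e, he, rfl⟩
    convert affine_add_smul_mem_accEnergies he x0 (x2 - x0) d using 2 <;> linarith

lemma acc3_eq_sq_mul (x0 x1 x2 : ℝ) :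
    acc3 x0 x1 x2 = (x1 - (x0 + x2) / 2) ^ 2 * acc3 0 1 0 := by
  rcases eq_or_ne (x1 - (x0 + x2) / 2) 0 with hd | hd
  · rw [acc3_eq_zero_of_eq_midpoint (by linarith), hd]
    ring
  · rw [acc3_eq_sInf, acc3_eq_sInf, accEnergies_eq_image hd]
    exact ((monotone_mul_left_of_nonneg (sq_nonneg _)).map_csInf_of_continuousAt
      (by fun_prop) accEnergies_zero_one_zero_nonempty (bddBelow_accEnergies 0 1 0)).symm

lemma mul_abs_intervalIntegral_le {f : ℝ → ℝ} (hf : Continuous f) {a b c : ℝ} (hab : a ≤ b)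
    (hc : 0 ≤ c) : 2 * c * |∫ t in a..b, f t| ≤ c ^ 2 * (b - a) + ∫ t in a..b, f t ^ 2 := by
  calc 2 * c * |∫ t in a..b, f t|
      ≤ 2 * c * ∫ t in a..b, |f t| := by
        gcongr
        exact intervalIntegral.abs_integral_le_integral_abs hab
    _ = ∫ t in a..b, 2 * c * |f t| := (intervalIntegral.integral_const_mul _ _).symm
    _ ≤ ∫ t in a..b, (c ^ 2 + f t ^ 2) := by
        refine intervalIntegral.integral_mono_on hab
          ((by fun_prop : Continuous _).intervalIntegrable _ _)
          ((by fun_prop : Continuous _).intervalIntegrable _ _) fun t _ => ?_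
        nlinarith [sq_nonneg (|f t| - c), sq_abs (f t)]
    _ = c ^ 2 * (b - a) + ∫ t in a..b, f t ^ 2 := by
        rw [intervalIntegral.integral_add intervalIntegrable_const
          ((by fun_prop : Continuous _).intervalIntegrable _ _)]
        simp [mul_comm]

lemma sixteen_le_acc3_zero_one_zero : 16 ≤ acc3 0 1 0 := by
  refine le_csInf accEnergies_zero_one_zero_nonempty ?_
  rintro e ⟨γ, hγ, h0, hmid, h1, rfl⟩
  -- `γ'` equals `2` somewhere in `(0, ½)` and `-2` somewhere in `(½, 1)`
  have hγ' := hγ.differentiable two_ne_zero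
  have hγ'' := hγ.differentiable_deriv_of_two
  have hcont : Continuous (deriv (deriv γ)) := (hγ.deriv' (n := 1)).continuous_deriv le_rfl
  obtain ⟨a, ha, hda⟩ := exists_deriv_eq_slope γ (by norm_num : (0:ℝ) < 1/2)
    hγ'.continuous.continuousOn hγ'.differentiableOn
  obtain ⟨b, hb, hdb⟩ := exists_deriv_eq_slope γ (by norm_num : (1:ℝ)/2 < 1)
    hγ'.continuous.continuousOn hγ'.differentiableOn
  have hab : a ≤ b := (ha.2.trans hb.1).le
  have hftc : ∫ t in a..b, deriv (deriv γ) t = -4 := by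
    rw [intervalIntegral.integral_deriv_eq_sub (fun t _ => hγ'' t) (hcont.intervalIntegrable a b),
      hda, hdb, h0, hmid, h1]
    norm_num
  have hsub : ∫ t in a..b, deriv (deriv γ) t ^ 2 ≤ ∫ t in (0:ℝ)..1, ‖deriv (deriv γ) t‖ ^ 2 := by
    simp only [Real.norm_eq_abs, sq_abs]
    exact intervalIntegral.integral_mono_interval ha.1.le hab hb.2.le
      (Filter.Eventually.of_forall fun t => sq_nonneg _)
      ((by fun_prop : Continuous _).intervalIntegrable _ _)
  have := mul_abs_intervalIntegral_le hcont hab (by norm_num : (0:ℝ) ≤ 4)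
  norm_num [hftc] at this
  linarith [ha.1, hb.2]

instance : IsProbabilityMeasure unif := by
  constructor
  norm_num [unif, Real.volume_Icc, ENNReal.inv_mul_cancel]

lemma unif_apply {s : Set ℝ} (hs : MeasurableSet s) :
    unif s = 2⁻¹ * volume (s ∩ Set.Icc (-1) 1) := by
  rw [unif, Measure.smul_apply, Measure.restrict_apply hs, smul_eq_mul]

lemma ae_mem_Icc_unif : ∀ᵐ x ∂unif, x ∈ Set.Icc (-1 : ℝ) 1 :=
  Measure.ae_smul_measure (ae_restrict_mem measurableSet_Icc) _

lemma unif_split_at_zero : unif = (2 : ENNReal)⁻¹ • volume.restrict (Set.Icc (-1 : ℝ) 0) +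
    (2 : ENNReal)⁻¹ • volume.restrict (Set.Icc (0 : ℝ) 1) := by
  have hdisj : AEDisjoint volume (Set.Icc (-1 : ℝ) 0) (Set.Icc 0 1) :=
    measure_mono_null (fun x hx => le_antisymm hx.1.2 hx.2.1) (Real.volume_singleton (a := 0))
  rw [unif, ← Set.Icc_union_Icc_eq_Icc (by norm_num) zero_le_one,
    Measure.restrict_union₀ hdisj measurableSet_Icc.nullMeasurableSet, smul_add]

lemma map_half_add_unif (s : ℝ) :
    unif.map (fun x => (x + s) / 2) = volume.restrict (Set.Icc ((s - 1) / 2) ((s + 1) / 2)) := by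
  have hvol : volume.map (fun x : ℝ => (x + s) / 2) = (2 : ENNReal) • volume := by
    have : (fun x : ℝ => (x + s) / 2) = (fun y => s / 2 + y) ∘ (fun x => 2⁻¹ * x) := by
      funext x; simp only [Function.comp]; ring
    rw [this, ← Measure.map_map (by fun_prop) (by fun_prop),
      Real.map_volume_mul_left (by norm_num), Measure.map_smul, map_add_left_eq_self]
    norm_num
  have hpre : (fun x : ℝ => (x + s) / 2) ⁻¹' Set.Icc ((s - 1) / 2) ((s + 1) / 2) =
      Set.Icc (-1) 1 := by
    ext x
    simp only [Set.mem_Icc, Set.mem_preimage]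
    constructor <;> rintro ⟨h₁, h₂⟩ <;> constructor <;> linarith
  rw [unif, Measure.map_smul, ← hpre, ← Measure.restrict_map (by fun_prop) measurableSet_Icc, hvol,
    Measure.restrict_smul, smul_smul, ENNReal.inv_mul_cancel two_ne_zero ENNReal.ofNat_ne_top,
    one_smul]

lemma unif_eq_zero_of_ae_eq_half_add {T : ℝ → ℝ} (hT : Measurable T) (hmap : unif.map T = unif)
    {A : Set ℝ} (hA : MeasurableSet A) {c : ℝ} (hTA : ∀ᵐ x ∂unif, x ∈ A → T x = (x + c) / 2) :
    unif A = 0 := by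
  set A' := A ∩ Set.Icc (-1) 1
  have hA' : MeasurableSet A' := hA.inter measurableSet_Icc
  set S := (fun y : ℝ => 2 * y) ⁻¹' ((fun z => z + -c) ⁻¹' A')
  have hS : MeasurableSet S := (by fun_prop : Measurable fun y : ℝ => 2 * y + -c) hA'
  have hunifA' : unif A' = 2⁻¹ * volume A' := by
    rw [unif_apply hA', Set.inter_eq_left.2 Set.inter_subset_right]
  have hvolS : volume S = 2⁻¹ * volume A' := by
    rw [Real.volume_preimage_mul_left two_ne_zero, measure_preimage_add_right,
      abs_of_pos (by norm_num), ENNReal.ofReal_inv_of_pos two_pos, ENNReal.ofReal_ofNat]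
  have hunifA : unif A = unif A' := by
    rw [unif_apply hA, unif_apply hA', Set.inter_assoc, Set.inter_self]
  have hle : unif A ≤ 2⁻¹ * unif A :=
    calc unif A = unif A' := hunifA
      _ ≤ unif (T ⁻¹' S) := measure_mono_ae <| hTA.mono fun x hx hxA' => by
          show 2 * T x + -c ∈ A'
          rwa [hx hxA'.1, show 2 * ((x + c) / 2) + -c = x by ring]
      _ = unif S := by rw [← Measure.map_apply hT hS, hmap]
      _ ≤ 2⁻¹ * volume S := by
          rw [unif_apply hS]
          gcongr
          exact Set.inter_subset_left
      _ = 2⁻¹ * unif A := by rw [hvolS, ← hunifA', hunifA]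
  by_contra h0
  have : (1 : ENNReal) ≤ 2⁻¹ :=
    (ENNReal.mul_le_mul_iff_left h0 (measure_ne_top unif A)).1 (by rwa [one_mul])
  norm_num at this

noncomputable def midpointTriple (s x : ℝ) : Fin 3 → ℝ := ![x, (x + s) / 2, s]

lemma measurable_midpointTriple (s : ℝ) : Measurable (midpointTriple s) := by
  refine measurable_pi_lambda _ fun i => ?_
  fin_cases i <;> simp only [midpointTriple] <;> fun_prop

noncomputable def midpointPlan : Measure (Fin 3 → ℝ) :=
  (2 : ENNReal)⁻¹ • unif.map (midpointTriple 1) + (2 : ENNReal)⁻¹ • unif.map (midpointTriple (-1))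

instance : IsProbabilityMeasure midpointPlan := by
  have := fun s =>
    Measure.isProbabilityMeasure_map (μ := unif) (measurable_midpointTriple s).aemeasurable
  constructor
  simp [midpointPlan, ENNReal.inv_two_add_inv_two]

lemma map_midpointPlan {β : Type*} [MeasurableSpace β] {g : (Fin 3 → ℝ) → β} (hg : Measurable g) :
    midpointPlan.map g = (2 : ENNReal)⁻¹ • unif.map (g ∘ midpointTriple 1) +
      (2 : ENNReal)⁻¹ • unif.map (g ∘ midpointTriple (-1)) := by
  rw [midpointPlan, Measure.map_add _ _ hg, Measure.map_smul, Measure.map_smul,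
    Measure.map_map hg (measurable_midpointTriple 1),
    Measure.map_map hg (measurable_midpointTriple (-1))]

lemma map_midpointPlan_zero : midpointPlan.map (fun v => v 0) = unif := by
  rw [map_midpointPlan (measurable_pi_apply 0)]
  simp [Function.comp_def, midpointTriple, ← add_smul, ENNReal.inv_two_add_inv_two]

lemma map_midpointPlan_one : midpointPlan.map (fun v => v 1) = unif := by
  rw [map_midpointPlan (measurable_pi_apply 1)]
  simp only [Function.comp_def, midpointTriple, Matrix.cons_val_one, Matrix.cons_val_zero]
  rw [map_half_add_unif, map_half_add_unif, unif_split_at_zero, add_comm]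
  norm_num

lemma map_midpointPlan_two : midpointPlan.map (fun v => v 2) =
    (2 : ENNReal)⁻¹ • Measure.dirac (1 : ℝ) + (2 : ENNReal)⁻¹ • Measure.dirac (-1 : ℝ) := by
  rw [map_midpointPlan (measurable_pi_apply 2)]
  simp [Function.comp_def, midpointTriple]

lemma ae_midpointPlan : ∀ᵐ v ∂midpointPlan, v 1 = (v 0 + v 2) / 2 := by
  have hp : MeasurableSet {v : Fin 3 → ℝ | v 1 = (v 0 + v 2) / 2} :=
    measurableSet_eq_fun (by fun_prop) (by fun_prop)
  have key : ∀ s, ∀ᵐ v ∂unif.map (midpointTriple s), v 1 = (v 0 + v 2) / 2 := fun s =>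
    (ae_map_iff (measurable_midpointTriple s).aemeasurable hp).2 <|
      ae_of_all _ fun x => by simp [midpointTriple]
  exact ae_add_measure_iff.2
    ⟨Measure.ae_smul_measure (key 1) _, Measure.ae_smul_measure (key (-1)) _⟩

lemma integral_acc3_midpointPlan : ∫ v, acc3 (v 0) (v 1) (v 2) ∂midpointPlan = 0 := by
  rw [integral_congr_ae (ae_midpointPlan.mono fun v hv => acc3_eq_zero_of_eq_midpoint hv)]
  exact integral_zero _ _

lemma ae_eq_midpoint_of_integral_acc3_eq_zero {α : Type*} [MeasurableSpace α] {μ : Measure α}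
    {X₀ X₁ X₂ : α → ℝ} (hint : Integrable (fun ω => (X₁ ω - (X₀ ω + X₂ ω) / 2) ^ 2) μ)
    (h : ∫ ω, acc3 (X₀ ω) (X₁ ω) (X₂ ω) ∂μ = 0) : ∀ᵐ ω ∂μ, X₁ ω = (X₀ ω + X₂ ω) / 2 := by
  rw [funext fun ω => acc3_eq_sq_mul (X₀ ω) (X₁ ω) (X₂ ω), integral_mul_const] at h
  have hκ : acc3 0 1 0 ≠ 0 := by linarith [sixteen_le_acc3_zero_one_zero]
  have h0 := (integral_eq_zero_iff_of_nonneg (fun ω => sq_nonneg _) hint).1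
    ((mul_eq_zero.1 h).resolve_right hκ)
  filter_upwards [h0] with ω hω
  linarith [pow_eq_zero_iff two_ne_zero |>.1 hω]

lemma integrable_sq_sub_midpoint {T₁ T₂ : ℝ → ℝ} (hT₁ : Measurable T₁) (hT₂ : Measurable T₂)
    (h₁ : ∀ᵐ x ∂unif, T₁ x ∈ Set.Icc (-1 : ℝ) 1) (h₂ : ∀ᵐ x ∂unif, T₂ x ∈ Set.Icc (-1 : ℝ) 1) :
    Integrable (fun x => (T₁ x - (x + T₂ x) / 2) ^ 2) unif := by
  refine Integrable.of_bound (by fun_prop) 4 ?_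
  filter_upwards [ae_mem_Icc_unif, h₁, h₂] with x hx hx₁ hx₂
  rw [Real.norm_eq_abs, abs_of_nonneg (sq_nonneg _)]
  nlinarith [hx.1, hx.2, hx₁.1, hx₁.2, hx₂.1, hx₂.2]

theorem stmt_13 :
    (sInf { v : ℝ | ∃ π : Measure (Fin 3 → ℝ), IsProbabilityMeasure π ∧
        Measure.map (fun f => f 0) π = unif ∧
        Measure.map (fun f => f 1) π = unif ∧
        Measure.map (fun f => f 2) π =
          (2 : ENNReal)⁻¹ • Measure.dirac (1:ℝ) + (2 : ENNReal)⁻¹ • Measure.dirac (-1:ℝ) ∧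
        v = ∫ f, acc3 (f 0) (f 1) (f 2) ∂π } = 0) ∧
    ¬ ∃ T1 T2 : ℝ → ℝ, Measurable T1 ∧ Measurable T2 ∧
        Measure.map T1 unif = unif ∧
        Measure.map T2 unif =
          (2 : ENNReal)⁻¹ • Measure.dirac (1:ℝ) + (2 : ENNReal)⁻¹ • Measure.dirac (-1:ℝ) ∧
        ∫ x, acc3 x (T1 x) (T2 x) ∂unif = 0 := by
  refine ⟨IsLeast.csInf_eq ⟨⟨midpointPlan, inferInstance, map_midpointPlan_zero,
    map_midpointPlan_one, map_midpointPlan_two, integral_acc3_midpointPlan.symm⟩, ?_⟩, ?_⟩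
  · rintro v ⟨π, -, -, -, -, rfl⟩
    exact integral_nonneg fun f => acc3_nonneg _ _ _
  rintro ⟨T1, T2, hT1, hT2, h1, h2, hI⟩
  have hT1_mem : ∀ᵐ x ∂unif, T1 x ∈ Set.Icc (-1 : ℝ) 1 :=
    ae_of_ae_map hT1.aemeasurable (by rw [h1]; exact ae_mem_Icc_unif)
  have hT2_mem : ∀ᵐ x ∂unif, T2 x ∈ Set.Icc (-1 : ℝ) 1 := by
    refine ae_of_ae_map hT2.aemeasurable ?_
    rw [h2, ae_add_measure_iff]
    constructor <;>
      exact Measure.ae_smul_measure ((ae_dirac_iff measurableSet_Icc).2 (by norm_num)) _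
  have hmid := ae_eq_midpoint_of_integral_acc3_eq_zero
    (integrable_sq_sub_midpoint hT1 hT2 hT1_mem hT2_mem) hI
  have hA : unif (T2 ⁻¹' {1}) = 2⁻¹ := by
    rw [← Measure.map_apply hT2 (measurableSet_singleton 1), h2]
    norm_num
  have := unif_eq_zero_of_ae_eq_half_add hT1 h1 (hT2 (measurableSet_singleton 1))
    (hmid.mono fun x hx hxA => by rwa [hxA] at hx)
  rw [hA] at this
  norm_num at this
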